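/- arXiv:2109.11729 — 5 statements merged into one kernel-verified Lean document; each statement's English description precedes it below -/
import Mathlib

section
/- Let p, q ∈ (1,∞) with 1/p + 1/q = 1, let ζ ∈ ℝⁿ with ‖ζ‖_q = 1, define ζ̄_i = -sgn(ζ_i)·|ζ_i|^(q-1), and let I = {i : ζ̄_i ≠ 0}. Then there exist C > 0 and ε > 0 such that for all ω ∈ ℝⁿ with ‖ω - ζ̄‖ ≤ ε and ‖ω‖_p = 1, one has 1 + ⟨ζ, ω⟩ ≥ C·∑_{i∈I} |ω_i - ζ̄_i|² + (1/p)·∑_{i∉I} |ω_i|^p. -/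
/-!
Since `‖ω‖_p = ‖ζ‖_q = 1`, `1 + ⟨ζ, ω⟩` is the sum over coordinates of the Young defects
`|ω i| ^ p / p + |ζ i| ^ q / q + ζ i * ω i`, each of which vanishes at `ω i = ζbar i`. Where `ζ i = 0` the defect
is exactly `|ω i| ^ p / p`. Elsewhere the substitution `ω i = ζbar i * u` turns it into
`|ζ i| ^ q * ((u ^ p - 1) / p - (u - 1))`, the remainder of the tangent line of `u ^ p / p` at
`u = 1`; since `(u ^ p / p)'' = (p - 1) u ^ (p - 2)` is bounded below near `1`, this remainder
dominates a multiple of `(u - 1) ^ 2`. Finitely many coordinates then allow one common constant.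
-/

open scoped Classical

open Set Filter Topology

theorem exists_mul_sq_le_rpow_sub_tangent {p a b : ℝ} (hp : 1 < p) (ha : 0 < a) (ha1 : a < 1)
    (hb : 1 < b) : ∃ c > 0, ∀ u ∈ Icc a b, c * (u - 1) ^ 2 ≤ (u ^ p - 1) / p - (u - 1) := by
  set m := min (a ^ (p - 2)) (b ^ (p - 2))
  have hm : 0 < m := lt_min (Real.rpow_pos_of_pos ha _) (Real.rpow_pos_of_pos (by linarith) _)
  have hm_le : ∀ u ∈ Icc a b, m ≤ u ^ (p - 2) := by
    rintro u ⟨hau, hub⟩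
    rcases le_or_gt p 2 with h | h
    · exact (min_le_right _ _).trans (Real.rpow_le_rpow_of_nonpos (by linarith) hub (by linarith))
    · exact (min_le_left _ _).trans (Real.rpow_le_rpow ha.le hau (by linarith))
  set c := (p - 1) * m / 2
  refine ⟨c, by have := sub_pos.2 hp; positivity, fun u hu => ?_⟩
  set g : ℝ → ℝ := fun u => (u ^ p - 1) / p - (u - 1) - c * (u - 1) ^ 2
  set g' : ℝ → ℝ := fun u => u ^ (p - 1) - 1 - 2 * c * (u - 1)
  have hg : ∀ u > 0, HasDerivAt g (g' u) u := fun u hu =>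
    ((((Real.hasDerivAt_rpow_const (p := p) (Or.inl hu.ne')).sub_const 1).div_const p).sub
      ((hasDerivAt_id u).sub_const 1)).sub
      ((((hasDerivAt_id u).sub_const 1).fun_pow 2).const_mul c) |>.congr_deriv <| by
        simp only [g', id]; field_simp; ring
  have hg' : ∀ u > 0, HasDerivAt g' ((p - 1) * u ^ (p - 2) - 2 * c) u := fun u hu =>
    (((Real.hasDerivAt_rpow_const (p := p - 1) (Or.inl hu.ne')).sub_const 1).sub
      (((hasDerivAt_id u).sub_const 1).const_mul (2 * c))).congr_deriv <| by ring_nf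
  have hpos : ∀ x ∈ interior (Icc a b), 0 < x := fun x hx => by
    rw [interior_Icc] at hx; exact ha.trans hx.1
  have hconv : ConvexOn ℝ (Icc a b) g := by
    refine convexOn_of_hasDerivWithinAt2_nonneg (convex_Icc a b) ?_
      (fun x hx => (hg x (hpos x hx)).hasDerivWithinAt)
      (fun x hx => (hg' x (hpos x hx)).hasDerivWithinAt) fun x hx => ?_
    · exact fun x hx => (hg x (ha.trans_le hx.1)).continuousAt.continuousWithinAt
    · rw [interior_Icc] at hx
      have := mul_le_mul_of_nonneg_left (hm_le x (Ioo_subset_Icc_self hx)) (sub_pos.2 hp).le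
      have hc : 2 * c = (p - 1) * m := by ring
      linarith
  have hmin : IsMinOn g (Icc a b) 1 := by
    refine hconv.isMinOn_of_rightDeriv_eq_zero (by rw [interior_Icc]; exact ⟨ha1, hb⟩) ?_
    rw [(hg 1 one_pos).hasDerivWithinAt.derivWithin (uniqueDiffWithinAt_Ioi 1)]
    simp [g']
  have hg1 : g 1 = 0 := by simp [g]
  have key : 0 ≤ g u := hg1 ▸ isMinOn_iff.1 hmin u hu
  simp only [g] at key
  linarith

theorem neg_sign_mul_abs_rpow_eq_zero_iff {a r : ℝ} : -Real.sign a * |a| ^ r = 0 ↔ a = 0 := by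
  simp [Real.sign_eq_zero_iff, Real.rpow_eq_zero_iff_of_nonneg, or_iff_left_of_imp And.left]

theorem eq_one_of_rpow_one_div_eq_one {x r : ℝ} (hx : 0 ≤ x) (hr : r ≠ 0) (h : x ^ (1 / r) = 1) :
    x = 1 := by
  rwa [one_div, Real.rpow_inv_eq hx zero_le_one hr, Real.one_rpow] at h

noncomputable def youngGap (p q a t : ℝ) : ℝ := |t| ^ p / p + |a| ^ q / q + a * t

theorem youngGap_zero_left {p q : ℝ} (hq : q ≠ 0) (t : ℝ) : youngGap p q 0 t = |t| ^ p / p := by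
  simp [youngGap, Real.zero_rpow hq]

theorem sum_youngGap_eq_one_add_sum_mul {ι : Type*} [Fintype ι] {p q : ℝ}
    (hpq : p.HolderConjugate q) {x y : ι → ℝ} (hx : ∑ i, |x i| ^ q = 1)
    (hy : ∑ i, |y i| ^ p = 1) : ∑ i, youngGap p q (x i) (y i) = 1 + ∑ i, x i * y i := by
  simp only [youngGap, Finset.sum_add_distrib, ← Finset.sum_div, hx, hy]
  linear_combination hpq.inv_add_inv_eq_one

theorem abs_le_sqrt_sum_sq {ι : Type*} [Fintype ι] (x : ι → ℝ) (i : ι) :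
    |x i| ≤ √(∑ j, x j ^ 2) :=
  Real.abs_le_sqrt <| Finset.single_le_sum (f := fun j => x j ^ 2) (fun _ _ => sq_nonneg _)
    (Finset.mem_univ i)

theorem mul_sq_le_youngGap {p q c : ℝ} (hpq : p.HolderConjugate q)
    (hc : ∀ u ∈ Icc (1 / 2 : ℝ) (3 / 2), c * (u - 1) ^ 2 ≤ (u ^ p - 1) / p - (u - 1))
    {a t : ℝ} (ha : a ≠ 0) (ht : |t - (-Real.sign a * |a| ^ (q - 1))| ≤ |a| ^ (q - 1) / 2) :
    c * |a| ^ q / (|a| ^ (q - 1)) ^ 2 * (t - (-Real.sign a * |a| ^ (q - 1))) ^ 2 ≤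
      youngGap p q a t := by
  obtain ⟨s, hs, hsa, has⟩ : ∃ s : ℝ, |s| = 1 ∧ Real.sign a = s ∧ a = s * |a| := by
    rcases ha.lt_or_gt with h | h
    · exact ⟨-1, by norm_num, Real.sign_of_neg h, by rw [abs_of_neg h]; ring⟩
    · exact ⟨1, by norm_num, Real.sign_of_pos h, by rw [abs_of_pos h]; ring⟩
  have hs2 : s * s = 1 := by rw [← abs_mul_abs_self, hs, one_mul]
  set b := |a|
  have hb : 0 < b := abs_pos.2 ha
  set B := b ^ (q - 1)
  have hB : 0 < B := Real.rpow_pos_of_pos hb _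
  have hBp : B ^ p = b ^ q := by rw [← Real.rpow_mul hb.le, hpq.symm.sub_one_mul_conj]
  have hbB : b * B = b ^ q := by
    rw [← Real.rpow_one_add' hb.le (by linarith [hpq.symm.lt]), add_sub_cancel]
  rw [hsa] at ht
  rw [youngGap, hsa]
  obtain ⟨u, rfl⟩ : ∃ u, t = -s * B * u :=
    ⟨-s * t / B, by field_simp; linear_combination (-t) * hs2⟩
  have hu1 : |u - 1| ≤ 1 / 2 := by
    have : u - 1 = -s * (-s * B * u - (-s * B)) / B := by
      field_simp; linear_combination (1 - u) * hs2
    rw [this, abs_div, abs_mul, abs_neg, hs, one_mul, abs_of_pos hB, div_le_iff₀ hB]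
    linarith
  have hu : u ∈ Icc (1 / 2 : ℝ) (3 / 2) := by
    obtain ⟨h1, h2⟩ := abs_le.1 hu1
    constructor <;> linarith
  have hu0 : 0 < u := by linarith [hu.1]
  have habs : |-s * B * u| = B * u := by
    rw [abs_mul, abs_mul, abs_neg, hs, one_mul, abs_of_pos hB, abs_of_pos hu0]
  have hsq : (-s * B * u - (-s * B)) ^ 2 = B ^ 2 * (u - 1) ^ 2 := by
    linear_combination (B * (u - 1)) ^ 2 * hs2
  calc c * b ^ q / B ^ 2 * (-s * B * u - (-s * B)) ^ 2 = b ^ q * (c * (u - 1) ^ 2) := by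
        rw [hsq]; field_simp
    _ ≤ b ^ q * ((u ^ p - 1) / p - (u - 1)) := by gcongr; exact hc u hu
    _ = |-s * B * u| ^ p / p + b ^ q / q + a * (-s * B * u) := by
        rw [habs, Real.mul_rpow hB.le hu0.le, hBp, has]
        linear_combination (-b ^ q) * hpq.inv_add_inv_eq_one + (b * B * u) * hs2 + u * hbB

theorem eventually_mul_sq_le_youngGap {p q : ℝ} (hpq : p.HolderConjugate q) {a : ℝ} (ha : a ≠ 0) :
    ∀ᶠ δ in 𝓝[>] 0, ∀ t, |t - (-Real.sign a * |a| ^ (q - 1))| ≤ δ →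
      δ * (t - (-Real.sign a * |a| ^ (q - 1))) ^ 2 ≤ youngGap p q a t := by
  obtain ⟨c, hc, hcore⟩ := exists_mul_sq_le_rpow_sub_tangent (a := 1 / 2) (b := 3 / 2) hpq.lt
    (by norm_num) (by norm_num) (by norm_num)
  have hB : 0 < |a| ^ (q - 1) := Real.rpow_pos_of_pos (abs_pos.2 ha) _
  have hc' : 0 < c * |a| ^ q / (|a| ^ (q - 1)) ^ 2 := by
    have := Real.rpow_pos_of_pos (abs_pos.2 ha) q; positivity
  filter_upwards [Ioo_mem_nhdsGT (lt_min hc' (half_pos hB))] with δ hδ t ht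
  calc δ * (t - (-Real.sign a * |a| ^ (q - 1))) ^ 2
      ≤ c * |a| ^ q / (|a| ^ (q - 1)) ^ 2 * (t - (-Real.sign a * |a| ^ (q - 1))) ^ 2 := by
        gcongr; exact hδ.2.le.trans (min_le_left _ _)
    _ ≤ _ := mul_sq_le_youngGap hpq hcore ha (ht.trans (hδ.2.le.trans (min_le_right _ _)))

theorem stmt_3_general (n : ℕ) (p q : ℝ) (hp : 1 < p) (hpq : 1 / p + 1 / q = 1)
    (ζ : Fin n → ℝ) (hζ : (∑ i, |ζ i| ^ q) ^ (1 / q) = 1)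
    (ζbar : Fin n → ℝ) (hζbar : ζbar = fun i => -Real.sign (ζ i) * |ζ i| ^ (q - 1)) :
    ∃ C > (0 : ℝ), ∃ ε > (0 : ℝ), ∀ ω : Fin n → ℝ,
      Real.sqrt (∑ i, (ω i - ζbar i) ^ 2) ≤ ε → (∑ i, |ω i| ^ p) ^ (1 / p) = 1 →
      C * (∑ i ∈ Finset.univ.filter (fun i => ζbar i ≠ 0), |ω i - ζbar i| ^ 2) +
          (1 / p) * (∑ i ∈ Finset.univ.filter (fun i => ¬ ζbar i ≠ 0), |ω i| ^ p) ≤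
        1 + ∑ i, ζ i * ω i := by
  have hpq : p.HolderConjugate q :=
    Real.holderConjugate_iff.2 ⟨hp, by simpa only [one_div] using hpq⟩
  have hζbar_eq_zero : ∀ i, ζbar i = 0 ↔ ζ i = 0 := fun i => by
    rw [hζbar]; exact neg_sign_mul_abs_rpow_eq_zero_iff
  obtain ⟨δ, hδ, hδ0⟩ : ∃ δ, (∀ i, ζ i ≠ 0 → ∀ t, |t - ζbar i| ≤ δ →
      δ * (t - ζbar i) ^ 2 ≤ youngGap p q (ζ i) t) ∧ 0 < δ := by
    subst hζbar
    exact ((eventually_all.2 fun i => eventually_imp_distrib_left.2 fun h =>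
      eventually_mul_sq_le_youngGap hpq h).and self_mem_nhdsWithin).exists
  refine ⟨δ, hδ0, δ, hδ0, fun ω hω hωp => ?_⟩
  rw [← sum_youngGap_eq_one_add_sum_mul hpq
      (eq_one_of_rpow_one_div_eq_one (by positivity) hpq.symm.ne_zero hζ)
      (eq_one_of_rpow_one_div_eq_one (by positivity) hpq.ne_zero hωp),
    ← Finset.sum_filter_add_sum_filter_not _ (fun i => ζbar i ≠ 0)
      (fun i => youngGap p q (ζ i) (ω i)), Finset.mul_sum, Finset.mul_sum]
  refine add_le_add (Finset.sum_le_sum fun i hi => ?_) (Finset.sum_le_sum fun i hi => ?_)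
  · rw [sq_abs]
    exact hδ i ((hζbar_eq_zero i).not.1 (Finset.mem_filter.1 hi).2) (ω i)
      ((abs_le_sqrt_sum_sq (ω - ζbar) i).trans hω)
  · rw [(hζbar_eq_zero i).1 (not_not.1 (Finset.mem_filter.1 hi).2),
      youngGap_zero_left hpq.symm.ne_zero, one_div_mul_eq_div]

/-- The quadratic/`p`-th power lower estimate in Lemma 4.1 of the paper. -/
theorem stmt_3 (n : ℕ) (p q : ℝ) (hp : 1 < p) (hq : 1 < q) (hpq : 1 / p + 1 / q = 1)
    (ζ : Fin n → ℝ) (hζ : (∑ i, |ζ i| ^ q) ^ (1 / q) = 1)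
    (ζbar : Fin n → ℝ) (hζbar : ζbar = fun i => -Real.sign (ζ i) * |ζ i| ^ (q - 1)) :
    ∃ C > (0 : ℝ), ∃ ε > (0 : ℝ), ∀ ω : Fin n → ℝ,
      Real.sqrt (∑ i, (ω i - ζbar i) ^ 2) ≤ ε → (∑ i, |ω i| ^ p) ^ (1 / p) = 1 →
      C * (∑ i ∈ Finset.univ.filter (fun i => ζbar i ≠ 0), |ω i - ζbar i| ^ 2) +
          (1 / p) * (∑ i ∈ Finset.univ.filter (fun i => ¬ ζbar i ≠ 0), |ω i| ^ p) ≤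
        1 + ∑ i, ζ i * ω i :=
  stmt_3_general n p q hp hpq ζ hζ ζbar hζbar
end

section
/- Let K be a pointed closed convex cone in a finite-dimensional Euclidean space, and let z ∈ relint(K*), where K* is the dual cone. Then there exists κ > 0 such that for every x in span(K) and every ε ≥ 0, if dist(x, K) ≤ ε and ⟨x, z⟩ ≤ ε, then dist(x, K ∩ {z}^⊥) = ‖x‖ ≤ (κ + κ‖z‖ + 1)·ε. -/
/-!
Since `z` lies in the relative interior of `K*`, every `w ∈ K*` can be pushed slightly past `z`,
to `z + t (z - w) ∈ K*`. Hence an `x ∈ K` orthogonal to `z` pairs nonpositively with all of `K*`,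
i.e. `-x ∈ K** = K`, and pointedness forces `x = 0`. So `⟪·, z⟫` is positive on the compact set of
unit vectors of `K`, which gives `β > 0` with `β ‖u‖ ≤ ⟪u, z⟫` on `K`, and `κ = β⁻¹` works: for `p ∈ K`
nearest to `x`, `‖x‖ ≤ ‖x - p‖ + β⁻¹ ⟪p, z⟫ ≤ ε + β⁻¹ (ε + ‖z‖ ε)`.
-/

open scoped RealInnerProductSpace
open Set Metric Filter Topology

theorem exists_add_smul_sub_mem_of_mem_intrinsicInterior {E : Type*} [NormedAddCommGroup E]
    [NormedSpace ℝ E] {C : Set E} {z w : E} (hz : z ∈ intrinsicInterior ℝ C) (hw : w ∈ C) :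
    ∃ t : ℝ, 0 < t ∧ z + t • (z - w) ∈ C := by
  obtain ⟨y, hy, rfl⟩ := mem_intrinsicInterior.1 hz
  let f : ℝ → affineSpan ℝ C := fun t =>
    ⟨y + t • ((y : E) - w),
      by simpa [add_comm] using
        (affineSpan ℝ C).smul_vsub_vadd_mem t y.2 (subset_affineSpan ℝ C hw) y.2⟩
  have hf : Continuous f := by fun_prop
  have h0 : ∀ᶠ t in 𝓝 (0 : ℝ), f t ∈ interior ((↑) ⁻¹' C) :=
    hf.continuousAt.preimage_mem_nhds (isOpen_interior.mem_nhds (by simpa [f] using hy))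
  obtain ⟨t, ht, ht0⟩ := ((h0.filter_mono nhdsWithin_le_nhds).and
    (self_mem_nhdsWithin : ∀ᶠ t in 𝓝[>] (0 : ℝ), 0 < t)).exists
  exact ⟨t, ht0, (interior_subset ht : f t ∈ (↑) ⁻¹' C)⟩

section InnerProductSpace

variable {E : Type*} [NormedAddCommGroup E] [InnerProductSpace ℝ E]

def ProperCone.ofConvex (K : Set E) (h0 : (0 : E) ∈ K) (hK_closed : IsClosed K)
    (hK_convex : Convex ℝ K) (hK_cone : ∀ x ∈ K, ∀ c : ℝ, 0 ≤ c → c • x ∈ K) :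
    ProperCone ℝ E where
  carrier := K
  add_mem' {x y} hx hy := by
    have hmid : (1 / 2 : ℝ) • x + (1 / 2 : ℝ) • y ∈ K :=
      hK_convex hx hy (by norm_num) (by norm_num) (by norm_num)
    convert hK_cone _ hmid 2 zero_le_two using 1
    module
  zero_mem' := h0
  smul_mem' c x hx := hK_cone x hx c c.2
  isClosed' := hK_closed

namespace ProperCone

variable [CompleteSpace E] {C : ProperCone ℝ E} {z : E}

theorem neg_mem_of_inner_eq_zero (hz : z ∈ intrinsicInterior ℝ (innerDual (C : Set E) : Set E))
    {x : E} (hx : x ∈ C) (hxz : ⟪x, z⟫ = 0) : -x ∈ C := by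
  rw [← innerDual_innerDual C]
  refine mem_innerDual.2 fun w hw => ?_
  obtain ⟨t, ht, hmem⟩ := exists_add_smul_sub_mem_of_mem_intrinsicInterior hz hw
  have := mem_innerDual.1 hmem hx
  rw [inner_add_right, inner_smul_right, inner_sub_right, hxz] at this
  rw [inner_neg_right, real_inner_comm]
  nlinarith

theorem inner_pos_of_mem_intrinsicInterior_innerDual (hC : (C : Set E) ∩ -C = {0})
    (hz : z ∈ intrinsicInterior ℝ (innerDual (C : Set E) : Set E))
    {x : E} (hx : x ∈ C) (hx0 : x ≠ 0) : 0 < ⟪x, z⟫ := by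
  refine (intrinsicInterior_subset hz hx).lt_of_ne fun hxz => hx0 ?_
  have : x ∈ (C : Set E) ∩ -C := ⟨hx, by simpa using neg_mem_of_inner_eq_zero hz hx hxz.symm⟩
  simpa [hC] using this

end ProperCone

theorem exists_pos_mul_norm_le_inner [FiniteDimensional ℝ E] {K : Set E} (hK_closed : IsClosed K)
    (hK_cone : ∀ x ∈ K, ∀ c : ℝ, 0 ≤ c → c • x ∈ K) {z : E}
    (hz : ∀ x ∈ K, x ≠ 0 → 0 < ⟪x, z⟫) : ∃ β > 0, ∀ x ∈ K, β * ‖x‖ ≤ ⟪x, z⟫ := by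
  obtain ⟨β, hβ, hmin⟩ := ((isCompact_sphere (0 : E) 1).inter_left hK_closed).exists_forall_le'
    (continuous_id.inner continuous_const).continuousOn
    fun x hx => hz x hx.1 (ne_zero_of_mem_unit_sphere ⟨x, hx.2⟩)
  refine ⟨β, hβ, fun x hx => ?_⟩
  rcases eq_or_ne x 0 with rfl | hx0
  · simp
  have hnorm : 0 < ‖x‖ := norm_pos_iff.2 hx0
  have hunit : ‖x‖⁻¹ • x ∈ K ∩ sphere 0 1 :=
    ⟨hK_cone x hx _ (inv_nonneg.2 hnorm.le), by simp [norm_smul, hnorm.ne']⟩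
  have : β ≤ ⟪‖x‖⁻¹ • x, z⟫ := hmin _ hunit
  rw [real_inner_smul_left, inv_mul_eq_div, le_div_iff₀ hnorm] at this
  exact this

theorem norm_le_of_infDist_le_of_inner_le [ProperSpace E] {K : Set E} (hK_closed : IsClosed K)
    (hK_ne : K.Nonempty) {z : E} {β : ℝ} (hβ : 0 < β) (hlower : ∀ u ∈ K, β * ‖u‖ ≤ ⟪u, z⟫)
    {x : E} {ε : ℝ} (hdist : infDist x K ≤ ε) (hxz : ⟪x, z⟫ ≤ ε) :
    ‖x‖ ≤ (β⁻¹ + β⁻¹ * ‖z‖ + 1) * ε := by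
  obtain ⟨p, hp, hpd⟩ := hK_closed.exists_infDist_eq_dist hK_ne x
  have hxp : ‖x - p‖ ≤ ε := by rwa [← dist_eq_norm, ← hpd]
  have hpz : ⟪p, z⟫ ≤ ε + ‖z‖ * ε :=
    calc ⟪p, z⟫ = ⟪x, z⟫ - ⟪x - p, z⟫ := by rw [inner_sub_left]; ring
      _ ≤ ε + ‖x - p‖ * ‖z‖ := by linarith [neg_le_of_abs_le (abs_real_inner_le_norm (x - p) z)]
      _ ≤ ε + ‖z‖ * ε := by rw [mul_comm]; gcongr
  have hp : ‖p‖ ≤ β⁻¹ * (ε + ‖z‖ * ε) := by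
    rw [le_inv_mul_iff₀ hβ]; exact (hlower p hp).trans hpz
  calc ‖x‖ ≤ ‖x - p‖ + ‖p‖ := norm_le_norm_sub_add x p
    _ ≤ ε + β⁻¹ * (ε + ‖z‖ * ε) := add_le_add hxp hp
    _ = (β⁻¹ + β⁻¹ * ‖z‖ + 1) * ε := by ring

end InnerProductSpace

/-- One-step facial residual function for the zero face: if `K` is a pointed
closed convex cone and `z ∈ relint K*`, there is `κ > 0` such that whenever
`x ∈ span K`, `dist(x,K) ≤ ε` and `⟨x,z⟩ ≤ ε`, one has
`dist(x, K ∩ {z}^⊥) = ‖x‖ ≤ (κ + κ‖z‖ + 1)·ε`. -/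
theorem stmt_5 {E : Type*} [NormedAddCommGroup E] [InnerProductSpace ℝ E]
    [FiniteDimensional ℝ E] (K : Set E)
    (hK_closed : IsClosed K) (hK_convex : Convex ℝ K)
    (hK_cone : ∀ x ∈ K, ∀ c : ℝ, 0 ≤ c → c • x ∈ K)
    (hK_pointed : K ∩ (-K) = {0}) (z : E)
    (hz : z ∈ intrinsicInterior ℝ {y : E | ∀ x ∈ K, 0 ≤ ⟪y, x⟫}) :
    ∃ κ > (0 : ℝ), ∀ x ∈ Submodule.span ℝ K, ∀ ε : ℝ, 0 ≤ ε →
      Metric.infDist x K ≤ ε → ⟪x, z⟫ ≤ ε →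
      Metric.infDist x (K ∩ {y | ⟪y, z⟫ = 0}) = ‖x‖ ∧ ‖x‖ ≤ (κ + κ * ‖z‖ + 1) * ε := by
  have h0 : (0 : E) ∈ K := (hK_pointed.ge rfl).1
  let C := ProperCone.ofConvex K h0 hK_closed hK_convex hK_cone
  have hzC : z ∈ intrinsicInterior ℝ (ProperCone.innerDual (C : Set E) : Set E) := by
    convert hz using 2
    ext y
    exact forall₂_congr fun x _ => by rw [innerₗ_apply_apply, real_inner_comm]
  have hpos : ∀ x ∈ K, x ≠ 0 → 0 < ⟪x, z⟫ := fun x hx hx0 =>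
    ProperCone.inner_pos_of_mem_intrinsicInterior_innerDual hK_pointed hzC hx hx0
  have hface : K ∩ {y | ⟪y, z⟫ = 0} = {0} :=
    eq_singleton_iff_unique_mem.2 ⟨⟨h0, inner_zero_left z⟩, fun x ⟨hx, hxz⟩ =>
      by_contra fun hx0 => (hpos x hx hx0).ne' hxz⟩
  obtain ⟨β, hβ, hlower⟩ := exists_pos_mul_norm_le_inner hK_closed hK_cone hpos
  refine ⟨β⁻¹, inv_pos.2 hβ, fun x _ ε _ hdist hxz => ⟨?_, ?_⟩⟩
  · rw [hface, infDist_singleton, dist_zero_right]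
  · exact norm_le_of_infDist_le_of_inner_le hK_closed ⟨0, h0⟩ hβ hlower hdist hxz
end

section
/- Let n ≥ 2, p, q ∈ (1,∞) with 1/p + 1/q = 1, and let z = (z₀, z̄) ∈ ∂K_q^{n+1} \ {0}, i.e., z₀ = ‖z̄‖_q > 0. Then {z}^⊥ ∩ K_p^{n+1} = {t·f : t ≥ 0}, where f = (1, -sgn(z̄) ∘ |z₀⁻¹ z̄|^(q-1)) (sign, absolute value and power taken componentwise, ∘ denoting componentwise product). -/
/-!
Normalize `b = z₀⁻¹ z̄`, so that `‖b‖_q = 1` and `x ⊥ z` reads `x₀ + ⟪x̄, b⟫ = 0`. For `x` in the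
`p`-cone with `x₀ > 0`, the vector `a = -x̄ / x₀` then has `‖a‖_p ≤ 1` and `⟪a, b⟫ = 1`, so summing
Young's inequality `a_i b_i ≤ |a_i|^p / p + |b_i|^q / q` over `i` gives `1 ≤ 1/p + 1/q = 1`.
Hence every Young inequality is an equality, which forces `|a_i|^p = |b_i|^q` with `a_i b_i ≥ 0`,
i.e. `a_i = sgn(b_i) |b_i|^(q-1)`: `x` is a nonnegative multiple of `f`.
-/

open scoped RealInnerProductSpace

namespace Real

lemma sign_mul_self_eq_abs (r : ℝ) : sign r * r = |r| := by
  rcases lt_trichotomy r 0 with h | rfl | h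
  · rw [sign_of_neg h, abs_of_neg h, neg_one_mul]
  · simp
  · rw [sign_of_pos h, abs_of_pos h, one_mul]

lemma sign_mul_of_pos {c : ℝ} (hc : 0 < c) (r : ℝ) : sign (c * r) = sign r := by
  rcases lt_trichotomy r 0 with h | rfl | h
  · rw [sign_of_neg h, sign_of_neg (mul_neg_of_pos_of_neg hc h)]
  · simp
  · rw [sign_of_pos h, sign_of_pos (mul_pos hc h)]

variable {p q : ℝ}

/-- The vector `sgn(b) ∘ |b|^(q-1)` at which Hölder's inequality `⟪a, b⟫ ≤ ‖a‖_p ‖b‖_q` is an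
equality. -/
noncomputable def holderDual {ι : Type*} (q : ℝ) (b : ι → ℝ) : ι → ℝ :=
  fun i => sign (b i) * |b i| ^ (q - 1)

lemma abs_sign_mul_rpow_sub_one_rpow (hpq : p.HolderConjugate q) (v : ℝ) :
    |sign v * |v| ^ (q - 1)| ^ p = |v| ^ q := by
  have hsign : |sign v * |v| ^ (q - 1)| = |v| ^ (q - 1) := by
    rcases eq_or_ne v 0 with rfl | hv
    · simp [zero_rpow hpq.symm.sub_one_ne_zero]
    · rw [abs_mul, abs_of_nonneg (rpow_nonneg (abs_nonneg v) _)]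
      rcases sign_apply_eq_of_ne_zero v hv with h | h <;> simp [h]
  rw [hsign, ← rpow_mul (abs_nonneg v), hpq.symm.sub_one_mul_conj]

lemma sign_mul_rpow_sub_one_mul_self (hq : q ≠ 0) (v : ℝ) :
    sign v * |v| ^ (q - 1) * v = |v| ^ q := by
  calc sign v * |v| ^ (q - 1) * v = |v| ^ (q - 1) * |v| ^ (1 : ℝ) := by
        rw [rpow_one, ← sign_mul_self_eq_abs]; ring
    _ = |v| ^ q := by rw [← rpow_add' (abs_nonneg v) (by simpa using hq)]; ring_nf

lemma eq_sign_mul_rpow_of_young_le (hpq : p.HolderConjugate q) {u v : ℝ}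
    (h : |u| ^ p / p + |v| ^ q / q ≤ u * v) : u = sign v * |v| ^ (q - 1) := by
  have hyoung := young_inequality_of_nonneg (abs_nonneg u) (abs_nonneg v) hpq
  have huv : u * v = |u| * |v| := le_antisymm ((le_abs_self _).trans (abs_mul u v).le)
    (hyoung.trans h)
  have habs : |u| = |v| ^ (q - 1) := by
    have hpow : |u| ^ p = |v| ^ q :=
      (young_inequality_eq_iff_of_nonneg (abs_nonneg u) (abs_nonneg v) hpq).1
        (le_antisymm hyoung (h.trans huv.le))
    rw [← rpow_rpow_inv (abs_nonneg u) hpq.ne_zero, hpow, ← rpow_mul (abs_nonneg v),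
      ← div_eq_mul_inv, hpq.symm.div_conj_eq_sub_one]
  rcases eq_or_ne v 0 with rfl | hv
  · rw [abs_zero, zero_rpow hpq.symm.sub_one_ne_zero, abs_eq_zero] at habs
    simp [habs]
  · refine mul_right_cancel₀ hv ?_
    rw [huv, habs, ← sign_mul_self_eq_abs v]; ring

section holderDual

variable {ι : Type*} [Fintype ι]

lemma sum_abs_holderDual_rpow (hpq : p.HolderConjugate q) (b : ι → ℝ) :
    ∑ i, |holderDual q b i| ^ p = ∑ i, |b i| ^ q :=
  Finset.sum_congr rfl fun i _ => abs_sign_mul_rpow_sub_one_rpow hpq (b i)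

lemma sum_holderDual_mul (hq : q ≠ 0) (b : ι → ℝ) :
    ∑ i, holderDual q b i * b i = ∑ i, |b i| ^ q :=
  Finset.sum_congr rfl fun i _ => sign_mul_rpow_sub_one_mul_self hq (b i)

/-- Equality case of Hölder's inequality, normalized to `‖a‖_p ≤ 1`, `‖b‖_q ≤ 1`. -/
lemma eq_holderDual_of_one_le_sum_mul (hpq : p.HolderConjugate q) {a b : ι → ℝ}
    (ha : ∑ i, |a i| ^ p ≤ 1) (hb : ∑ i, |b i| ^ q ≤ 1) (hab : 1 ≤ ∑ i, a i * b i) :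
    a = holderDual q b := by
  have hyoung : ∀ i ∈ Finset.univ, a i * b i ≤ |a i| ^ p / p + |b i| ^ q / q :=
    fun i _ => young_inequality (a i) (b i) hpq
  have hsum : ∑ i, (|a i| ^ p / p + |b i| ^ q / q) ≤ 1 := by
    calc ∑ i, (|a i| ^ p / p + |b i| ^ q / q)
          = (∑ i, |a i| ^ p) / p + (∑ i, |b i| ^ q) / q := by
          rw [Finset.sum_add_distrib, Finset.sum_div, Finset.sum_div]
      _ ≤ 1 / p + 1 / q :=
          add_le_add (div_le_div_of_nonneg_right ha hpq.nonneg)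
            (div_le_div_of_nonneg_right hb hpq.symm.nonneg)
      _ = 1 := by simpa only [one_div] using hpq.inv_add_inv_eq_one
  have heq := (Finset.sum_eq_sum_iff_of_le hyoung).1 (le_antisymm (Finset.sum_le_sum hyoung)
    (hsum.trans hab))
  funext i
  exact eq_sign_mul_rpow_of_young_le hpq (heq i (Finset.mem_univ i)).ge

lemma abs_le_sum_rpow_rpow_one_div (hp : 0 < p) (x : ι → ℝ) (i : ι) :
    |x i| ≤ (∑ j, |x j| ^ p) ^ (1 / p) := by
  calc |x i| = (|x i| ^ p) ^ (1 / p) := by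
        rw [← rpow_mul (abs_nonneg _), mul_one_div_cancel hp.ne', rpow_one]
    _ ≤ (∑ j, |x j| ^ p) ^ (1 / p) :=
        rpow_le_rpow (by positivity)
          (Finset.single_le_sum (f := fun j => |x j| ^ p) (fun j _ => by positivity)
            (Finset.mem_univ i)) (by positivity)

lemma sum_abs_smul_rpow {t : ℝ} (ht : 0 ≤ t) (x : ι → ℝ) :
    ∑ i, |(t • x) i| ^ p = t ^ p * ∑ i, |x i| ^ p := by
  rw [Finset.mul_sum]
  refine Finset.sum_congr rfl fun i _ => ?_
  rw [Pi.smul_apply, smul_eq_mul, abs_mul, abs_of_nonneg ht, mul_rpow ht (abs_nonneg _)]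

lemma sum_abs_inv_smul_rpow_eq_one (hq : q ≠ 0) {v : ι → ℝ} {c : ℝ}
    (hc : c = (∑ i, |v i| ^ q) ^ (1 / q)) (hc₀ : 0 < c) : ∑ i, |(c⁻¹ • v) i| ^ q = 1 := by
  have hcq : c ^ q = ∑ i, |v i| ^ q := by
    rw [hc, ← rpow_mul (by positivity), one_div_mul_cancel hq, rpow_one]
  rw [sum_abs_smul_rpow (inv_nonneg.2 hc₀.le), ← hcq, inv_rpow hc₀.le,
    inv_mul_cancel₀ (rpow_pos_of_pos hc₀ q).ne']

/-- In coordinates `(x₀, x)`, the face of the `p`-cone exposed by `(1, b)` with `‖b‖_q = 1` is the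
ray through `(1, -holderDual q b)`. -/
lemma rpow_sum_le_and_add_sum_mul_eq_zero_iff (hpq : p.HolderConjugate q) {b : ι → ℝ}
    (hb : ∑ i, |b i| ^ q = 1) (x₀ : ℝ) (x : ι → ℝ) :
    (∑ i, |x i| ^ p) ^ (1 / p) ≤ x₀ ∧ x₀ + ∑ i, x i * b i = 0 ↔
      0 ≤ x₀ ∧ x = -x₀ • holderDual q b := by
  constructor
  · rintro ⟨hnorm, horth⟩
    have hx₀ : 0 ≤ x₀ := (rpow_nonneg (by positivity) _).trans hnorm
    refine ⟨hx₀, ?_⟩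
    rcases hx₀.eq_or_lt with rfl | hx₀
    · funext i
      simpa using (abs_le_sum_rpow_rpow_one_div hpq.pos x i).trans hnorm
    have hdual : -x₀⁻¹ • x = holderDual q b := by
      refine eq_holderDual_of_one_le_sum_mul hpq ?_ hb.le ?_
      · have hpow : ∑ i, |x i| ^ p ≤ x₀ ^ p := by
          rwa [one_div, rpow_inv_le_iff_of_pos (by positivity) hx₀.le hpq.pos] at hnorm
        simp only [neg_smul, Pi.neg_apply, abs_neg]
        rw [sum_abs_smul_rpow (inv_nonneg.2 hx₀.le)]
        calc x₀⁻¹ ^ p * ∑ i, |x i| ^ p ≤ x₀⁻¹ ^ p * x₀ ^ p := by gcongr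
          _ = 1 := by rw [inv_rpow hx₀.le, inv_mul_cancel₀ (rpow_pos_of_pos hx₀ p).ne']
      · have hxb : ∑ i, x i * b i = -x₀ := by linarith
        simp only [Pi.smul_apply, smul_eq_mul, mul_assoc, ← Finset.mul_sum, hxb]
        rw [neg_mul_neg, inv_mul_cancel₀ hx₀.ne']
    rw [← hdual, smul_smul, neg_mul_neg, mul_inv_cancel₀ hx₀.ne', one_smul]
  · rintro ⟨hx₀, rfl⟩
    constructor
    · simp only [neg_smul, Pi.neg_apply, abs_neg]
      rw [sum_abs_smul_rpow hx₀, sum_abs_holderDual_rpow hpq, hb, mul_one,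
        ← rpow_mul hx₀, mul_one_div_cancel hpq.ne_zero, rpow_one]
    · simp only [Pi.smul_apply, smul_eq_mul, mul_assoc, ← Finset.mul_sum,
        sum_holderDual_mul hpq.symm.ne_zero, hb]
      ring

end holderDual

end Real

lemma EuclideanSpace.inner_eq_mul_add_sum_succ {n : ℕ} (x z : EuclideanSpace ℝ (Fin (n + 1))) :
    ⟪x, z⟫ = x 0 * z 0 + ∑ i : Fin n, x i.succ * z i.succ := by
  simp [PiLp.inner_apply, Fin.sum_univ_succ, mul_comm]

theorem stmt_8_general (n : ℕ) (p q : ℝ) (hp : 1 < p)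
    (hpq : 1 / p + 1 / q = 1)
    (z : EuclideanSpace ℝ (Fin (n + 1)))
    (hz0 : z 0 = (∑ i : Fin n, |z i.succ| ^ q) ^ (1 / q)) (hz0pos : 0 < z 0)
    (f : EuclideanSpace ℝ (Fin (n + 1))) (hf0 : f 0 = 1)
    (hfi : ∀ i : Fin n, f i.succ = -Real.sign (z i.succ) * |(z 0)⁻¹ * z i.succ| ^ (q - 1)) :
    {x : EuclideanSpace ℝ (Fin (n + 1)) |
        (∑ i : Fin n, |x i.succ| ^ p) ^ (1 / p) ≤ x 0 ∧ ⟪x, z⟫ = 0} =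
      {x | ∃ t : ℝ, 0 ≤ t ∧ x = t • f} := by
  have hconj : p.HolderConjugate q :=
    Real.holderConjugate_iff.2 ⟨hp, by simpa only [one_div] using hpq⟩
  set b : Fin n → ℝ := (z 0)⁻¹ • fun i => z i.succ with hb_def
  have hb : ∑ i, |b i| ^ q = 1 := Real.sum_abs_inv_smul_rpow_eq_one hconj.symm.ne_zero hz0 hz0pos
  have hf : ∀ i, f i.succ = -Real.holderDual q b i := fun i => by
    rw [hfi, Real.holderDual, hb_def, Pi.smul_apply, smul_eq_mul,
      Real.sign_mul_of_pos (inv_pos.2 hz0pos)]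
    ring
  have horth : ∀ x : EuclideanSpace ℝ (Fin (n + 1)),
      ⟪x, z⟫ = 0 ↔ x 0 + ∑ i, x i.succ * b i = 0 := fun x => by
    have hscale :
        x 0 * z 0 + ∑ i : Fin n, x i.succ * z i.succ = z 0 * (x 0 + ∑ i, x i.succ * b i) := by
      simp only [hb_def, Pi.smul_apply, smul_eq_mul, mul_add, Finset.mul_sum]
      field_simp
    rw [EuclideanSpace.inner_eq_mul_add_sum_succ, hscale, mul_eq_zero, or_iff_right hz0pos.ne']
  ext x
  simp only [Set.mem_ofPred_eq, horth,
    Real.rpow_sum_le_and_add_sum_mul_eq_zero_iff hconj hb (x 0) (fun i => x i.succ)]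
  constructor
  · rintro ⟨hx0, hx⟩
    refine ⟨x 0, hx0, ?_⟩
    ext j
    cases j using Fin.cases with
    | zero => simp [hf0]
    | succ i => simpa [hf] using congrFun hx i
  · rintro ⟨t, ht, rfl⟩
    refine ⟨by simpa [hf0] using ht, ?_⟩
    funext i
    simp [hf, hf0]

/-- The nontrivial exposed faces of the `p`-cone: if `z` lies on the boundary of
the dual `q`-cone and `z ≠ 0`, then `{z}^⊥ ∩ K_p^{n+1}` is the ray generated by
`f = (1, -sgn(z̄) ∘ |z₀⁻¹ z̄|^(q-1))`. -/
theorem stmt_8 (n : ℕ) (hn : 2 ≤ n) (p q : ℝ) (hp : 1 < p) (hq : 1 < q)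
    (hpq : 1 / p + 1 / q = 1)
    (z : EuclideanSpace ℝ (Fin (n + 1)))
    (hz0 : z 0 = (∑ i : Fin n, |z i.succ| ^ q) ^ (1 / q)) (hz0pos : 0 < z 0)
    (f : EuclideanSpace ℝ (Fin (n + 1))) (hf0 : f 0 = 1)
    (hfi : ∀ i : Fin n, f i.succ = -Real.sign (z i.succ) * |(z 0)⁻¹ * z i.succ| ^ (q - 1)) :
    {x : EuclideanSpace ℝ (Fin (n + 1)) |
        (∑ i : Fin n, |x i.succ| ^ p) ^ (1 / p) ≤ x 0 ∧ ⟪x, z⟫ = 0} =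
      {x | ∃ t : ℝ, 0 ≤ t ∧ x = t • f} :=
  stmt_8_general n p q hp hpq z hz0 hz0pos f hf0 hfi
end

section
/- Let n ≥ 2, p ∈ (1,∞), and let z ∈ ∂K_q^{n+1} \ {0} (with 1/p+1/q=1) be such that the index set J_z = {i : z̄_i ≠ 0} is a proper subset of {1,...,n}. Let F_z = {z}^⊥ ∩ K_p^{n+1} = {t·f : t ≥ 0} with f = (1, -sgn(z̄)∘|z₀⁻¹z̄|^(q-1)). Then there exists a continuous function w : (0,1] → {z}^⊥ \ F_z with lim_{ε↓0} w_ε = f and limsup_{ε↓0} dist(w_ε, K_p^{n+1})^(1/p) / dist(w_ε, F_z) ≤ (1/p)^(1/p) < ∞. -/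
/-!
Equality in Hölder's inequality `⟨x̄, z̄⟩ ≥ -‖x̄‖_p ‖z̄‖_q` singles out `f`: one gets `‖f̄‖_p = 1`
and `⟨f, z⟩ = 0`. For `j ∉ J_z` also `f_j = 0`, so `w_ε = f + ε e_j` stays in `{z}^⊥`, and since
every point of the ray `F_z` has `j`-th coordinate `0`, `dist(w_ε, F_z) ≥ ε`. Raising the
coordinate `x₀ = 1` of `w_ε` to `‖w̄_ε‖_p = (1 + ε^p)^(1/p) ≤ 1 + ε^p / p` (Bernoulli) moves it
into `K_p`, hence `dist(w_ε, K_p)^(1/p) ≤ (1/p)^(1/p) ε`.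
-/

open scoped RealInnerProductSpace

open Metric Filter

def pCone (n : ℕ) (p : ℝ) : Set (EuclideanSpace ℝ (Fin (n + 1))) :=
  {x | (∑ i : Fin n, |x i.succ| ^ p) ^ (1 / p) ≤ x 0}

lemma infDist_pCone_le {n : ℕ} (p : ℝ) (x : EuclideanSpace ℝ (Fin (n + 1))) :
    infDist x (pCone n p) ≤ |(∑ i : Fin n, |x i.succ| ^ p) ^ (1 / p) - x 0| := by
  set r := (∑ i : Fin n, |x i.succ| ^ p) ^ (1 / p)
  set y := x + (r - x 0) • EuclideanSpace.single 0 (1 : ℝ)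
  have hy : y ∈ pCone n p := by simp [pCone, y, r]
  calc infDist x (pCone n p) ≤ dist x y := infDist_le_dist_of_mem hy
    _ = |r - x 0| := by simp [y, dist_eq_norm, norm_smul]

lemma abs_apply_le_infDist {ι : Type*} [Fintype ι] {S : Set (EuclideanSpace ℝ ι)}
    (hS : S.Nonempty) {i : ι} (hSi : ∀ y ∈ S, y i = 0) (x : EuclideanSpace ℝ ι) :
    |x i| ≤ infDist x S :=
  (le_infDist hS).2 fun y hy => by
    simpa [hSi y hy, Real.dist_eq] using PiLp.dist_apply_le x y i

lemma Real.sign_mul_self_eq_abs_s11 (x : ℝ) : Real.sign x * x = |x| := by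
  rcases lt_trichotomy x 0 with h | rfl | h
  · rw [Real.sign_of_neg h, abs_of_neg h]; ring
  · simp
  · rw [Real.sign_of_pos h, abs_of_pos h]; ring

section HolderFace

variable {n : ℕ} {p q : ℝ} {z f : EuclideanSpace ℝ (Fin (n + 1))}

lemma abs_rpow_eq_of_holder_face (hpq : p.HolderConjugate q) (hz0pos : 0 < z 0)
    (hfi : ∀ i : Fin n, f i.succ = -Real.sign (z i.succ) * |(z 0)⁻¹ * z i.succ| ^ (q - 1))
    (i : Fin n) : |f i.succ| ^ p = (|z i.succ| / z 0) ^ q := by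
  rcases eq_or_ne (z i.succ) 0 with h | h
  · simp [hfi i, h, Real.zero_rpow hpq.symm.pos.ne', Real.zero_rpow hpq.pos.ne']
  · have hsign : |Real.sign (z i.succ)| = 1 := by
      rcases Real.sign_apply_eq_of_ne_zero _ h with hs | hs <;> simp [hs]
    rw [hfi i, abs_mul, abs_neg, hsign, one_mul, abs_of_nonneg (by positivity), abs_mul,
      abs_inv, abs_of_pos hz0pos, inv_mul_eq_div, ← Real.rpow_mul (by positivity),
      hpq.symm.sub_one_mul_conj]

lemma mul_apply_eq_of_holder_face (hq : 0 < q) (hz0pos : 0 < z 0)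
    (hfi : ∀ i : Fin n, f i.succ = -Real.sign (z i.succ) * |(z 0)⁻¹ * z i.succ| ^ (q - 1))
    (i : Fin n) : f i.succ * z i.succ = -(|z i.succ| ^ q / z 0 ^ (q - 1)) := by
  have hq' : q - 1 + 1 ≠ 0 := by linarith
  calc f i.succ * z i.succ
      = -(|z i.succ| ^ (q - 1) * (Real.sign (z i.succ) * z i.succ)) / z 0 ^ (q - 1) := by
        rw [hfi i, abs_mul, abs_inv, abs_of_pos hz0pos, inv_mul_eq_div,
          Real.div_rpow (abs_nonneg _) hz0pos.le]
        ring
    _ = -(|z i.succ| ^ q / z 0 ^ (q - 1)) := by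
        rw [Real.sign_mul_self_eq_abs_s11, ← Real.rpow_add_one' (abs_nonneg _) hq', sub_add_cancel,
          neg_div]

lemma rpow_eq_sum_of_dual_norm (hq : 0 < q) (hz0 : z 0 = (∑ i : Fin n, |z i.succ| ^ q) ^ (1 / q)) :
    z 0 ^ q = ∑ i : Fin n, |z i.succ| ^ q := by
  rw [hz0, ← Real.rpow_mul (by positivity), one_div_mul_cancel hq.ne', Real.rpow_one]

lemma sum_abs_rpow_eq_one_of_holder_face (hpq : p.HolderConjugate q)
    (hz0 : z 0 = (∑ i : Fin n, |z i.succ| ^ q) ^ (1 / q)) (hz0pos : 0 < z 0)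
    (hfi : ∀ i : Fin n, f i.succ = -Real.sign (z i.succ) * |(z 0)⁻¹ * z i.succ| ^ (q - 1)) :
    ∑ i : Fin n, |f i.succ| ^ p = 1 := by
  simp_rw [abs_rpow_eq_of_holder_face hpq hz0pos hfi, Real.div_rpow (abs_nonneg _) hz0pos.le,
    ← Finset.sum_div, ← rpow_eq_sum_of_dual_norm hpq.symm.pos hz0]
  exact div_self (Real.rpow_pos_of_pos hz0pos q).ne'

lemma inner_eq_zero_of_holder_face (hq : 0 < q)
    (hz0 : z 0 = (∑ i : Fin n, |z i.succ| ^ q) ^ (1 / q)) (hz0pos : 0 < z 0) (hf0 : f 0 = 1)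
    (hfi : ∀ i : Fin n, f i.succ = -Real.sign (z i.succ) * |(z 0)⁻¹ * z i.succ| ^ (q - 1)) :
    ⟪f, z⟫ = 0 := by
  rw [EuclideanSpace.inner_eq_star_dotProduct]
  simp only [dotProduct, Fin.sum_univ_succ, star_trivial]
  simp_rw [mul_comm (z _), hf0, mul_apply_eq_of_holder_face hq hz0pos hfi,
    Finset.sum_neg_distrib, ← Finset.sum_div, ← rpow_eq_sum_of_dual_norm hq hz0,
    ← Real.rpow_sub hz0pos, sub_sub_cancel, Real.rpow_one]
  ring

end HolderFace

section Curve

variable {n : ℕ} {p : ℝ} {f : EuclideanSpace ℝ (Fin (n + 1))} {j : Fin n}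

lemma sum_abs_rpow_add_single (hp : p ≠ 0) (hfj : f j.succ = 0) (ε : ℝ) :
    ∑ i : Fin n, |(f + ε • EuclideanSpace.single j.succ (1 : ℝ)) i.succ| ^ p
      = ∑ i : Fin n, |f i.succ| ^ p + |ε| ^ p := by
  have hterm (i : Fin n) : |(f + ε • EuclideanSpace.single j.succ (1 : ℝ)) i.succ| ^ p
      = |f i.succ| ^ p + if i = j then |ε| ^ p else 0 := by
    rcases eq_or_ne i j with rfl | hij
    · simp [hfj, Real.zero_rpow hp]
    · simp [hij]
  simp_rw [hterm, Finset.sum_add_distrib, Finset.sum_ite_eq', Finset.mem_univ, if_true]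

lemma infDist_pCone_add_single_le (hp : 1 ≤ p) (hf0 : f 0 = 1)
    (hfp : ∑ i : Fin n, |f i.succ| ^ p = 1) (hfj : f j.succ = 0) (ε : ℝ) :
    infDist (f + ε • EuclideanSpace.single j.succ (1 : ℝ)) (pCone n p) ≤ |ε| ^ p / p := by
  have hp0 : 0 < p := by linarith
  have hs : 0 ≤ |ε| ^ p := by positivity
  have hlower : 1 ≤ (1 + |ε| ^ p) ^ (1 / p) := Real.one_le_rpow (by linarith) (by positivity)
  have hupper : (1 + |ε| ^ p) ^ (1 / p) ≤ 1 + 1 / p * |ε| ^ p :=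
    rpow_one_add_le_one_add_mul_self (by linarith) (by positivity) ((div_le_one hp0).2 hp)
  refine (infDist_pCone_le p _).trans ?_
  rw [sum_abs_rpow_add_single hp0.ne' hfj, hfp]
  have hw0 : (f + ε • EuclideanSpace.single j.succ (1 : ℝ)) 0 = 1 := by
    simp [hf0, (Fin.succ_ne_zero j).symm]
  rw [hw0, abs_of_nonneg (by linarith)]
  linarith [show 1 / p * |ε| ^ p = |ε| ^ p / p by ring]

lemma abs_le_infDist_ray_add_single (hfj : f j.succ = 0) (ε : ℝ) :
    |ε| ≤ infDist (f + ε • EuclideanSpace.single j.succ (1 : ℝ))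
      {x | ∃ t : ℝ, 0 ≤ t ∧ x = t • f} := by
  have h := abs_apply_le_infDist (S := {x | ∃ t : ℝ, 0 ≤ t ∧ x = t • f})
    ⟨0, 0, le_rfl, (zero_smul ℝ f).symm⟩ (i := j.succ) (by rintro _ ⟨t, -, rfl⟩; simp [hfj])
    (f + ε • EuclideanSpace.single j.succ (1 : ℝ))
  simpa [hfj] using h

end Curve

lemma rpow_one_div_div_le {p a b ε : ℝ} (hp : 0 < p) (hε : 0 < ε) (ha : 0 ≤ a)
    (haε : a ≤ ε ^ p / p) (hεb : ε ≤ b) : a ^ (1 / p) / b ≤ (1 / p) ^ (1 / p) := by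
  have hroot : (ε ^ p / p) ^ (1 / p) = ε * (1 / p) ^ (1 / p) := by
    rw [div_eq_mul_one_div, Real.mul_rpow (by positivity) (by positivity),
      ← Real.rpow_mul hε.le, mul_one_div_cancel hp.ne', Real.rpow_one]
  calc a ^ (1 / p) / b ≤ ε * (1 / p) ^ (1 / p) / ε :=
        div_le_div₀ (by positivity) (hroot ▸ Real.rpow_le_rpow ha haε (by positivity)) hε hεb
    _ = (1 / p) ^ (1 / p) := by field_simp

theorem stmt_11_general (n : ℕ) (p q : ℝ) (hp : 1 < p)
    (hpq : 1 / p + 1 / q = 1)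
    (z : EuclideanSpace ℝ (Fin (n + 1)))
    (hz0 : z 0 = (∑ i : Fin n, |z i.succ| ^ q) ^ (1 / q)) (hz0pos : 0 < z 0)
    (hJ : ∃ j : Fin n, z j.succ = 0)
    (f : EuclideanSpace ℝ (Fin (n + 1))) (hf0 : f 0 = 1)
    (hfi : ∀ i : Fin n, f i.succ = -Real.sign (z i.succ) * |(z 0)⁻¹ * z i.succ| ^ (q - 1)) :
    let Kp : Set (EuclideanSpace ℝ (Fin (n + 1))) :=
      {x | (∑ i : Fin n, |x i.succ| ^ p) ^ (1 / p) ≤ x 0}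
    let Fz : Set (EuclideanSpace ℝ (Fin (n + 1))) := {x | ∃ t : ℝ, 0 ≤ t ∧ x = t • f}
    ∃ w : ℝ → EuclideanSpace ℝ (Fin (n + 1)),
      ContinuousOn w (Set.Ioc 0 1) ∧
      (∀ ε ∈ Set.Ioc (0 : ℝ) 1, ⟪w ε, z⟫ = 0 ∧ w ε ∉ Fz) ∧
      Filter.Tendsto w (nhdsWithin 0 (Set.Ioi 0)) (nhds f) ∧
      Filter.limsup
        (fun ε => Metric.infDist (w ε) Kp ^ (1 / p) / Metric.infDist (w ε) Fz)
        (nhdsWithin 0 (Set.Ioi 0)) ≤ (1 / p) ^ (1 / p) := by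
  intro Kp Fz
  obtain ⟨j, hzj⟩ := hJ
  have hpq : p.HolderConjugate q :=
    Real.holderConjugate_iff.2 ⟨hp, by simpa only [one_div] using hpq⟩
  have hfj : f j.succ = 0 := by simp [hfi j, hzj]
  have hfp := sum_abs_rpow_eq_one_of_holder_face hpq hz0 hz0pos hfi
  set w : ℝ → EuclideanSpace ℝ (Fin (n + 1)) := fun ε => f + ε • EuclideanSpace.single j.succ 1
  have hw : Continuous w := by fun_prop
  have hFz (ε : ℝ) : |ε| ≤ infDist (w ε) Fz := abs_le_infDist_ray_add_single hfj ε
  have hKp (ε : ℝ) : infDist (w ε) Kp ≤ |ε| ^ p / p :=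
    infDist_pCone_add_single_le hp.le hf0 hfp hfj ε
  refine ⟨w, hw.continuousOn, fun ε hε => ⟨?_, fun hmem => ?_⟩, ?_, ?_⟩
  · simp [w, inner_add_left, real_inner_smul_left, EuclideanSpace.inner_single_left, hzj,
      inner_eq_zero_of_holder_face hpq.symm.pos hz0 hz0pos hf0 hfi]
  · exact (abs_pos.2 hε.1.ne').not_ge ((hFz ε).trans (infDist_zero_of_mem hmem).le)
  · simpa [w] using (hw.tendsto 0).mono_left nhdsWithin_le_nhds
  · refine limsup_le_of_le (isCoboundedUnder_le_of_le _ fun ε =>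
      div_nonneg (Real.rpow_nonneg infDist_nonneg _) infDist_nonneg) ?_
    filter_upwards [self_mem_nhdsWithin] with ε (hε : 0 < ε)
    exact rpow_one_div_div_le hpq.pos (abs_pos.2 hε.ne') infDist_nonneg (hKp ε) (hFz ε)

/-- Lemma 4.4: when `J_z ⊊ {1,…,n}`, there is a curve `w_ε` in `{z}^⊥ \ F_z`
converging to `f` whose distance ratio of order `1/p` stays bounded
(indeed with limsup at most `(1/p)^(1/p)`). -/
theorem stmt_11 (n : ℕ) (hn : 2 ≤ n) (p q : ℝ) (hp : 1 < p) (hq : 1 < q)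
    (hpq : 1 / p + 1 / q = 1)
    (z : EuclideanSpace ℝ (Fin (n + 1)))
    (hz0 : z 0 = (∑ i : Fin n, |z i.succ| ^ q) ^ (1 / q)) (hz0pos : 0 < z 0)
    (hJ : ∃ j : Fin n, z j.succ = 0)
    (f : EuclideanSpace ℝ (Fin (n + 1))) (hf0 : f 0 = 1)
    (hfi : ∀ i : Fin n, f i.succ = -Real.sign (z i.succ) * |(z 0)⁻¹ * z i.succ| ^ (q - 1)) :
    let Kp : Set (EuclideanSpace ℝ (Fin (n + 1))) :=
      {x | (∑ i : Fin n, |x i.succ| ^ p) ^ (1 / p) ≤ x 0}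
    let Fz : Set (EuclideanSpace ℝ (Fin (n + 1))) := {x | ∃ t : ℝ, 0 ≤ t ∧ x = t • f}
    ∃ w : ℝ → EuclideanSpace ℝ (Fin (n + 1)),
      ContinuousOn w (Set.Ioc 0 1) ∧
      (∀ ε ∈ Set.Ioc (0 : ℝ) 1, ⟪w ε, z⟫ = 0 ∧ w ε ∉ Fz) ∧
      Filter.Tendsto w (nhdsWithin 0 (Set.Ioi 0)) (nhds f) ∧
      Filter.limsup
        (fun ε => Metric.infDist (w ε) Kp ^ (1 / p) / Metric.infDist (w ε) Fz)
        (nhdsWithin 0 (Set.Ioi 0)) ≤ (1 / p) ^ (1 / p) :=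
  stmt_11_general n p q hp hpq z hz0 hz0pos hJ f hf0 hfi
end

section
/- Let K be a closed convex cone, z ∈ K* , and suppose Φ : ℝ≥0 × ℝ≥0 → ℝ≥0 is a consistent error bound function for the pair of sets K and {z}^⊥, i.e., dist(x, K ∩ {z}^⊥) ≤ Φ(max{dist(x,K), dist(x,{z}^⊥)}, ‖x‖) for all x, with Φ monotone nondecreasing in each argument, right-continuous at 0 in the first argument, and Φ(0,b)=0. Then Φ is a one-step facial residual function for K and z; that is, for every x and every ε ≥ 0, if dist(x, K) ≤ ε and ⟨x, z⟩ ≤ ε, then dist(x, K ∩ {z}^⊥) ≤ Φ(ε, ‖x‖). -/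
open scoped RealInnerProductSpace

/-- A consistent error bound function for `K` and `{z}^⊥` is a one-step facial
residual function for `K` and `z` (with `‖z‖ = 1`). -/
theorem stmt_15 {E : Type*} [NormedAddCommGroup E] [InnerProductSpace ℝ E]
    (K : Set E) (hK_closed : IsClosed K) (hK_convex : Convex ℝ K)
    (hK_cone : ∀ x ∈ K, ∀ c : ℝ, 0 ≤ c → c • x ∈ K)
    (z : E) (hz : ∀ x ∈ K, 0 ≤ ⟪z, x⟫) (hz1 : ‖z‖ = 1)
    (Φ : ℝ → ℝ → ℝ) (hΦ_nonneg : ∀ a b, 0 ≤ Φ a b)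
    (hΦ_eb : ∀ x : E,
      Metric.infDist x (K ∩ {y | ⟪y, z⟫ = 0}) ≤
        Φ (max (Metric.infDist x K) (Metric.infDist x {y | ⟪y, z⟫ = 0})) ‖x‖)
    (hΦ_mono1 : ∀ b, MonotoneOn (fun a => Φ a b) (Set.Ici 0))
    (hΦ_mono2 : ∀ a, MonotoneOn (fun b => Φ a b) (Set.Ici 0))
    (hΦ_rc : ∀ b, ContinuousWithinAt (fun a => Φ a b) (Set.Ici 0) 0)
    (hΦ_zero : ∀ b, Φ 0 b = 0) :
    ∀ x : E, ∀ ε : ℝ, 0 ≤ ε → Metric.infDist x K ≤ ε → ⟪x, z⟫ ≤ ε →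
      Metric.infDist x (K ∩ {y | ⟪y, z⟫ = 0}) ≤ Φ ε ‖x‖ := by
  intro x ε hε hxK hxz
  rcases K.eq_empty_or_nonempty with hKe | hKne
  · rw [hKe, Set.empty_inter, Metric.infDist_empty]
    exact hΦ_nonneg _ _
  -- lower bound on ⟪x, z⟫
  have hlow : -ε ≤ ⟪x, z⟫ := by
    have h : ∀ δ : ℝ, 0 < δ → -⟪x, z⟫ ≤ ε + δ := by
      intro δ hδ
      obtain ⟨y, hyK, hdy⟩ := (Metric.infDist_lt_iff hKne).mp
        (lt_of_le_of_lt hxK (lt_add_of_pos_right ε hδ))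
      have h1 : 0 ≤ ⟪y, z⟫ := by rw [real_inner_comm]; exact hz y hyK
      have h2 : -(‖x - y‖ * ‖z‖) ≤ ⟪x - y, z⟫ :=
        neg_le_of_abs_le (abs_real_inner_le_norm _ _)
      have h3 : ⟪x - y, z⟫ = ⟪x, z⟫ - ⟪y, z⟫ := by
        rw [inner_sub_left]
      have h4 : ‖x - y‖ < ε + δ := by rwa [← dist_eq_norm]
      nlinarith [norm_nonneg (x - y)]
    linarith [le_of_forall_pos_le_add h]
  have habs : |⟪x, z⟫| ≤ ε := abs_le.mpr ⟨hlow, hxz⟩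
  -- distance to the hyperplane
  have hhyp : Metric.infDist x {y : E | ⟪y, z⟫ = 0} ≤ ε := by
    have hmem : x - ⟪x, z⟫ • z ∈ {y : E | ⟪y, z⟫ = 0} := by
      simp only [Set.mem_setOf_eq, inner_sub_left, real_inner_smul_left,
        real_inner_self_eq_norm_sq, hz1]
      ring
    calc Metric.infDist x {y : E | ⟪y, z⟫ = 0} ≤ dist x (x - ⟪x, z⟫ • z) :=
          Metric.infDist_le_dist_of_mem hmem
      _ = ‖⟪x, z⟫ • z‖ := by rw [dist_eq_norm]; congr 1; abel
      _ = |⟪x, z⟫| := by rw [norm_smul, hz1, Real.norm_eq_abs, mul_one]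
      _ ≤ ε := habs
  have hmax : max (Metric.infDist x K) (Metric.infDist x {y : E | ⟪y, z⟫ = 0}) ≤ ε :=
    max_le hxK hhyp
  have hmax0 : (0:ℝ) ≤ max (Metric.infDist x K) (Metric.infDist x {y : E | ⟪y, z⟫ = 0}) :=
    le_trans (Metric.infDist_nonneg) (le_max_left _ _)
  calc Metric.infDist x (K ∩ {y : E | ⟪y, z⟫ = 0})
      ≤ Φ (max (Metric.infDist x K) (Metric.infDist x {y : E | ⟪y, z⟫ = 0})) ‖x‖ := hΦ_eb x
    _ ≤ Φ ε ‖x‖ := hΦ_mono1 ‖x‖ hmax0 hε hmax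
end
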